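/- arXiv:2301.10627 — 3 statements merged into one kernel-verified Lean document; each statement's English description precedes it below -/
import Mathlib

section
/- Let W be a finite Coxeter group. For every v, w ∈ W, the set [e,v]_R ∩ [e,w] = {x ∈ W : x ≤_R v and x ≤ w} has a unique element of maximal length. -/
/-- The right weak Bruhat order: `u ≤_R v` iff `ℓ(u) + ℓ(u⁻¹v) = ℓ(v)`. -/
def rWeak {B W : Type*} [Group W] {M : CoxeterMatrix B} (cs : CoxeterSystem M W)
    (u v : W) : Prop :=
  cs.length u + cs.length (u⁻¹ * v) = cs.length v

/-- The strong Bruhat order: `u ≤ v` iff some reduced word for `v` has a subword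
which is a word for `u`. -/
def bruhat {B W : Type*} [Group W] {M : CoxeterMatrix B} (cs : CoxeterSystem M W)
    (u v : W) : Prop :=
  ∃ ω : List B, cs.IsReduced ω ∧ cs.wordProd ω = v ∧
    ∃ ω' : List B, ω'.Sublist ω ∧ cs.wordProd ω' = u

/-!
Every element of `[e,v]_R ∩ [e,w]` lies Bruhat-below one of them, `x(v, w)`, found by induction
on `ℓ w`: for a left descent `s` of `w`, `x(v, w) = s · x(sv, sw)` if `s` is also a left descent
of `v`, and `x(v, w) = x(v, sw)` otherwise. The inductive step is the lifting property of the
Bruhat order together with its analogue for the right weak order.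

Both rest on the sign cocycle `η(w, t) = ±1` (`inversionSign`) of the Björner–Brenti
permutation representation of `W` on `W × {±1}`, for which `η(w, t) = -1` exactly when
`ℓ(wt) < ℓ(w)`. This gives the strong exchange condition, hence the subword property: the Bruhat
order is generated by `x < xt` for reflections `t` with `ℓ x < ℓ (xt)`.
-/

open List
open Relation (ReflTransGen)

namespace CoxeterSystem

/-! ### The sign cocycle of the reflection representation -/

open Classical in
noncomputable def reflSign {W : Type*} (t u : W) : ℤˣ := if u = t then -1 else 1

theorem reflSign_congr {W : Type*} {t u t' u' : W} (h : u = t ↔ u' = t') :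
    reflSign t u = reflSign t' u' := by
  rw [reflSign, reflSign, h]

theorem reflSign_comm {W : Type*} (t u : W) : reflSign t u = reflSign u t :=
  reflSign_congr eq_comm

variable {B W : Type*} [Group W] {M : CoxeterMatrix B} (cs : CoxeterSystem M W)

local prefix:100 "s" => cs.simple
local prefix:100 "π" => cs.wordProd
local prefix:100 "ℓ" => cs.length
local prefix:100 "ris" => cs.rightInvSeq

theorem prod_map_alternatingWord_two_mul {G : Type*} [Monoid G] (f : B → G) (i j : B) (m : ℕ) :
    ((alternatingWord i j (2 * m)).map f).prod = (f i * f j) ^ m := by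
  induction m with
  | zero => simp [alternatingWord]
  | succ m ih =>
    rw [show 2 * (m + 1) = 2 * m + 1 + 1 by ring, alternatingWord_succ', alternatingWord_succ',
      if_neg (by simp), if_pos (by simp), map_cons, map_cons, prod_cons,
      prod_cons, ih, pow_succ', mul_assoc]

theorem rightInvSeq_alternatingWord (i j : B) (n : ℕ) :
    ris (alternatingWord i j n) = ((range n).map fun k ↦ (s j * s i) ^ k * s j).reverse := by
  induction n generalizing i j with
  | zero => rfl
  | succ n ih =>
    have conj_eq (k : ℕ) :
        MulAut.conj (s j) ((s i * s j) ^ k * s i) = (s j * s i) ^ (k + 1) * s j := by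
      have : s j * (s i * s j) ^ k = (s j * s i) ^ k * s j :=
        (SemiconjBy.pow_right (mul_assoc _ _ _).symm k : SemiconjBy (s j) _ _)
      rw [MulAut.conj_apply, inv_simple, ← mul_assoc, this, pow_succ]
      simp only [mul_assoc]
    rw [alternatingWord_succ, rightInvSeq_concat, ih, range_succ_eq_map, map_cons, map_map,
      reverse_cons, concat_eq_append, map_reverse, map_map]
    simp only [Function.comp_def, conj_eq, pow_zero, one_mul]

noncomputable def wordSign (t : W) (ω : List B) : ℤˣ := ((ris ω).map (reflSign t)).prod

theorem wordSign_eq_one_of_not_mem {t : W} {ω : List B} (h : t ∉ ris ω) : cs.wordSign t ω = 1 :=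
  prod_eq_one fun _ hx ↦ by
    obtain ⟨u, hu, rfl⟩ := mem_map.mp hx
    exact if_neg (by rintro rfl; exact h hu)

theorem wordSign_alternatingWord (t : W) (i j : B) :
    cs.wordSign t (alternatingWord i j (2 * M i j)) = 1 := by
  have periodic (k : ℕ) : (s j * s i) ^ (M i j + k) * s j = (s j * s i) ^ k * s j := by
    rw [pow_add, simple_mul_simple_pow', one_mul]
  rw [wordSign, rightInvSeq_alternatingWord, map_reverse, prod_reverse, two_mul, range_add,
    map_append, map_append, prod_append]
  simp only [map_map, Function.comp_def, periodic, Int.units_mul_self]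

theorem reflSign_conj_simple (i : B) (u : W) :
    reflSign (s i) (s i * u * s i) = reflSign (s i) u :=
  reflSign_congr (by rw [mul_assoc, mul_eq_left, mul_eq_one_iff_eq_inv, inv_simple])

theorem simplePerm_involutive (i : B) :
    Function.Involutive fun p : W × ℤˣ ↦ (s i * p.1 * s i, reflSign (s i) p.1 * p.2) := by
  rintro ⟨u, ε⟩
  simp only [reflSign_conj_simple, ← mul_assoc, Int.units_mul_self, one_mul,
    simple_mul_simple_self, simple_mul_simple_cancel_right]

/-- The action of `s i` in the permutation representation of Björner–Brenti
(*Combinatorics of Coxeter groups*, §1.4), extended from reflections × signs to `W × ℤˣ`. -/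
noncomputable def simplePerm (i : B) : Equiv.Perm (W × ℤˣ) := (cs.simplePerm_involutive i).toPerm

theorem prod_map_simplePerm_apply (ω : List B) (p : W × ℤˣ) :
    (ω.map cs.simplePerm).prod p = (π ω * p.1 * (π ω)⁻¹, cs.wordSign p.1 ω * p.2) := by
  induction ω with
  | nil => simp [wordSign]
  | cons i ω ih =>
    have hsign : reflSign (s i) (π ω * p.1 * (π ω)⁻¹) = reflSign p.1 ((π ω)⁻¹ * s i * π ω) :=
      reflSign_congr ⟨fun h ↦ by rw [← h]; group, fun h ↦ by rw [← h]; group⟩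
    rw [map_cons, prod_cons, Equiv.Perm.mul_apply, ih]
    simp only [simplePerm, Function.Involutive.coe_toPerm]
    rw [hsign]
    simp [wordSign, rightInvSeq, wordProd_cons, mul_assoc]

theorem wordProd_alternatingWord_two_mul_eq_one (i j : B) :
    π (alternatingWord i j (2 * M i j)) = 1 := by
  rw [wordProd, prod_map_alternatingWord_two_mul, simple_mul_simple_pow]

theorem isLiftable_simplePerm : M.IsLiftable cs.simplePerm := by
  intro i j
  ext1 p
  rw [← prod_map_alternatingWord_two_mul, prod_map_simplePerm_apply,
    wordProd_alternatingWord_two_mul_eq_one, wordSign_alternatingWord]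
  simp

noncomputable def reflRep : W →* Equiv.Perm (W × ℤˣ) :=
  cs.lift ⟨cs.simplePerm, cs.isLiftable_simplePerm⟩

noncomputable def inversionSign (w t : W) : ℤˣ := (cs.reflRep w (t, 1)).2

theorem reflRep_wordProd (ω : List B) : cs.reflRep (π ω) = (ω.map cs.simplePerm).prod := by
  rw [wordProd, map_list_prod, map_map]
  congr 2
  ext1 i
  exact cs.lift_apply_simple cs.isLiftable_simplePerm i

theorem inversionSign_wordProd (t : W) (ω : List B) :
    cs.inversionSign (π ω) t = cs.wordSign t ω := by
  simp [inversionSign, reflRep_wordProd, prod_map_simplePerm_apply]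

theorem reflRep_apply (w : W) (p : W × ℤˣ) :
    cs.reflRep w p = (w * p.1 * w⁻¹, cs.inversionSign w p.1 * p.2) := by
  obtain ⟨ω, -, rfl⟩ := cs.exists_isReduced w
  rw [reflRep_wordProd, prod_map_simplePerm_apply, inversionSign_wordProd]

theorem inversionSign_mul (a b t : W) :
    cs.inversionSign (a * b) t = cs.inversionSign b t * cs.inversionSign a (b * t * b⁻¹) := by
  rw [inversionSign, map_mul, Equiv.Perm.mul_apply, reflRep_apply cs b, reflRep_apply cs a]
  simp [mul_comm, inversionSign]

theorem inversionSign_one (t : W) : cs.inversionSign 1 t = 1 := by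
  simp [inversionSign]

theorem inversionSign_simple (i : B) (t : W) : cs.inversionSign (s i) t = reflSign (s i) t := by
  simpa [wordSign, reflSign_comm] using cs.inversionSign_wordProd t [i]

theorem inversionSign_self {t : W} (ht : cs.IsReflection t) : cs.inversionSign t t = -1 := by
  obtain ⟨u, i, rfl⟩ := ht
  have hu : cs.inversionSign u (s i) * cs.inversionSign u⁻¹ (u * s i * u⁻¹) = 1 := by
    simpa [inversionSign_one] using (cs.inversionSign_mul u⁻¹ u (s i)).symm
  have hus : cs.inversionSign (u * s i) (s i) = -cs.inversionSign u (s i) := by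
    simp [inversionSign_mul, inversionSign_simple, reflSign]
  calc cs.inversionSign (u * s i * u⁻¹) (u * s i * u⁻¹)
      = cs.inversionSign u⁻¹ (u * s i * u⁻¹) * cs.inversionSign (u * s i) (s i) := by
        simp [inversionSign_mul, mul_assoc]
    _ = -1 := by rw [hus, mul_neg, mul_comm, hu]

theorem length_mul_lt_of_inversionSign_eq_neg_one {w t : W} (h : cs.inversionSign w t = -1) :
    ℓ (w * t) < ℓ w := by
  obtain ⟨ω, hω, rfl⟩ := cs.exists_isReduced w
  have hmem : t ∈ ris ω := by
    by_contra hn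
    rw [inversionSign_wordProd, wordSign_eq_one_of_not_mem cs hn] at h
    exact absurd h (by decide)
  exact (cs.isRightInversion_of_mem_rightInvSeq hω hmem).2

theorem inversionSign_eq_neg_one_iff {w t : W} (ht : cs.IsReflection t) :
    cs.inversionSign w t = -1 ↔ ℓ (w * t) < ℓ w := by
  refine ⟨cs.length_mul_lt_of_inversionSign_eq_neg_one, fun hlt ↦ ?_⟩
  have hsplit : cs.inversionSign w t = -cs.inversionSign (w * t) t := by
    simpa [mul_assoc, ht.mul_self, ht.inv, inversionSign_self cs ht] using
      cs.inversionSign_mul (w * t) t t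
  rcases Int.units_eq_one_or (cs.inversionSign (w * t) t) with h | h
  · rwa [h] at hsplit
  · have := cs.length_mul_lt_of_inversionSign_eq_neg_one h
    rw [mul_assoc, ht.mul_self, mul_one] at this
    omega

theorem inversionSign_eq_one_of_length_lt {w t : W} (h : ℓ w < ℓ (w * t)) :
    cs.inversionSign w t = 1 :=
  (Int.units_eq_one_or _).resolve_right fun h' ↦
    (cs.length_mul_lt_of_inversionSign_eq_neg_one h').not_gt h

/-- The strong exchange condition. -/
theorem mem_rightInvSeq_of_length_mul_lt {ω : List B} {t : W} (ht : cs.IsReflection t)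
    (hlt : ℓ (π ω * t) < ℓ π ω) : t ∈ ris ω := by
  by_contra hn
  have := (cs.inversionSign_eq_neg_one_iff ht).2 hlt
  rw [inversionSign_wordProd, wordSign_eq_one_of_not_mem cs hn] at this
  exact absurd this (by decide)

theorem exists_eraseIdx_wordProd_eq_mul {ω : List B} {t : W} (ht : cs.IsReflection t)
    (hlt : ℓ (π ω * t) < ℓ π ω) : ∃ j, π (ω.eraseIdx j) = π ω * t := by
  obtain ⟨j, hj, rfl⟩ := getElem_of_mem (cs.mem_rightInvSeq_of_length_mul_lt ht hlt)
  exact ⟨j, by rw [← cs.wordProd_mul_getD_rightInvSeq, getD_eq_getElem]⟩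

theorem simple_mul_eq_mul_of_length_lt {i : B} {x t : W} (ht : cs.IsReflection t)
    (hx : ℓ x < ℓ (x * t)) (hsx : ℓ (s i * x * t) < ℓ (s i * x)) : s i * x = x * t := by
  have hsign := (cs.inversionSign_eq_neg_one_iff ht).2 hsx
  rw [inversionSign_mul, cs.inversionSign_eq_one_of_length_lt hx, one_mul,
    inversionSign_simple] at hsign
  have hconj : x * t * x⁻¹ = s i := by
    by_contra hne
    rw [reflSign, if_neg hne] at hsign
    exact absurd hsign (by decide)
  rw [← hconj]
  group

theorem isReduced_cons_iff {i : B} {ω : List B} :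
    cs.IsReduced (i :: ω) ↔ cs.IsReduced ω ∧ ¬cs.IsLeftDescent (π ω) i := by
  have hlen := cs.length_wordProd_le ω
  rw [not_isLeftDescent_iff, IsReduced, IsReduced, wordProd_cons, length_cons]
  rcases cs.length_simple_mul (π ω) i with h | h <;> omega

/-! ### The Bruhat order as chains of reflections -/

def BruhatStep (x y : W) : Prop := ∃ t, cs.IsReflection t ∧ x * t = y ∧ ℓ x < ℓ y

theorem bruhatStep_mul_left {x t : W} (ht : cs.IsReflection t) (hlt : ℓ x < ℓ (t * x)) :
    cs.BruhatStep x (t * x) :=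
  ⟨x⁻¹ * t * x, by simpa using ht.conj x⁻¹, by group, hlt⟩

theorem bruhatStep_simple_mul {i : B} {x : W} (hx : ¬cs.IsLeftDescent x i) :
    cs.BruhatStep x (s i * x) :=
  cs.bruhatStep_mul_left (cs.isReflection_simple i) (by rw [cs.not_isLeftDescent_iff.1 hx]; omega)

theorem reflTransGen_bruhatStep_simple_mul {i : B} {x y : W}
    (h : ReflTransGen cs.BruhatStep x y) (hy : ¬cs.IsLeftDescent y i) :
    ReflTransGen cs.BruhatStep (s i * x) (s i * y) := by
  induction h using Relation.ReflTransGen.head_induction_on with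
  | refl => rfl
  | @head a _ hab hby ih =>
    obtain ⟨t, ht, rfl, hlt⟩ := hab
    rcases (ht.length_mul_left_ne (s i * a)).lt_or_gt with hdown | hup
    · rw [cs.simple_mul_eq_mul_of_length_lt ht hlt hdown]
      exact hby.tail (cs.bruhatStep_simple_mul hy)
    · exact ih.head ⟨t, ht, mul_assoc .., by rwa [← mul_assoc]⟩

theorem reflTransGen_bruhatStep_of_sublist {ω ω' : List B} (hω : cs.IsReduced ω) (h : ω' <+ ω) :
    ReflTransGen cs.BruhatStep (π ω') (π ω) := by
  induction h with
  | slnil => rfl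
  | cons i _ ih =>
    obtain ⟨hred, hi⟩ := cs.isReduced_cons_iff.1 hω
    rw [wordProd_cons]
    exact (ih hred).tail (cs.bruhatStep_simple_mul hi)
  | cons_cons i _ ih =>
    obtain ⟨hred, hi⟩ := cs.isReduced_cons_iff.1 hω
    rw [wordProd_cons, wordProd_cons]
    exact cs.reflTransGen_bruhatStep_simple_mul (ih hred) hi

theorem exists_sublist_of_reflTransGen_bruhatStep {x : W} {ω : List B}
    (h : ReflTransGen cs.BruhatStep x (π ω)) : ∃ ω', ω' <+ ω ∧ π ω' = x := by
  induction h using Relation.ReflTransGen.head_induction_on with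
  | refl => exact ⟨ω, .refl ω, rfl⟩
  | @head a _ hab _ ih =>
    obtain ⟨t, ht, rfl, hlt⟩ := hab
    obtain ⟨ω', hsub, hprod⟩ := ih
    have hcancel : a * t * t = a := by rw [mul_assoc, ht.mul_self, mul_one]
    obtain ⟨j, he⟩ := cs.exists_eraseIdx_wordProd_eq_mul (ω := ω') ht (by rwa [hprod, hcancel])
    exact ⟨ω'.eraseIdx j, (eraseIdx_sublist _ j).trans hsub, by rw [he, hprod, hcancel]⟩

/-- The subword property. -/
theorem bruhat_iff_reflTransGen {x w : W} : bruhat cs x w ↔ ReflTransGen cs.BruhatStep x w := by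
  constructor
  · rintro ⟨ω, hω, rfl, ω', hsub, rfl⟩
    exact cs.reflTransGen_bruhatStep_of_sublist hω hsub
  · intro h
    obtain ⟨ω, hω, rfl⟩ := cs.exists_isReduced w
    obtain ⟨ω', hsub, rfl⟩ := cs.exists_sublist_of_reflTransGen_bruhatStep h
    exact ⟨ω, hω, rfl, ω', hsub, rfl⟩

theorem bruhat_trans {x y z : W} (hxy : bruhat cs x y) (hyz : bruhat cs y z) : bruhat cs x z := by
  rw [bruhat_iff_reflTransGen] at *
  exact hxy.trans hyz

theorem eq_or_length_lt_of_bruhat {x w : W} (h : bruhat cs x w) : x = w ∨ ℓ x < ℓ w := by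
  rw [bruhat_iff_reflTransGen] at h
  induction h with
  | refl => exact .inl rfl
  | tail _ hstep ih =>
    obtain ⟨t, -, rfl, hlt⟩ := hstep
    rcases ih with rfl | h
    exacts [.inr hlt, .inr (h.trans hlt)]

theorem length_le_of_bruhat {x w : W} (h : bruhat cs x w) : ℓ x ≤ ℓ w :=
  (cs.eq_or_length_lt_of_bruhat h).elim (fun h ↦ h ▸ le_rfl) le_of_lt

theorem bruhat_simple_mul_self {i : B} {x : W} (hx : ¬cs.IsLeftDescent x i) :
    bruhat cs x (s i * x) :=
  cs.bruhat_iff_reflTransGen.2 (.single (cs.bruhatStep_simple_mul hx))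

theorem simple_mul_self_bruhat {i : B} {w : W} (hw : cs.IsLeftDescent w i) :
    bruhat cs (s i * w) w := by
  simpa using cs.bruhat_simple_mul_self (cs.isLeftDescent_iff_not_isLeftDescent_mul.1 hw)

theorem simple_mul_bruhat_simple_mul_of_not_isLeftDescent {i : B} {x y : W} (h : bruhat cs x y)
    (hy : ¬cs.IsLeftDescent y i) : bruhat cs (s i * x) (s i * y) := by
  rw [bruhat_iff_reflTransGen] at *
  exact cs.reflTransGen_bruhatStep_simple_mul h hy

theorem bruhat_simple_mul_or (i : B) {y w : W} (h : bruhat cs y w) :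
    bruhat cs y (s i * w) ∨ bruhat cs (s i * y) (s i * w) := by
  obtain ⟨τ, hτ, hτw⟩ := cs.exists_isReduced (s i * w)
  rw [bruhat_iff_reflTransGen, ← cs.simple_mul_simple_cancel_left (w := w) i, hτw,
    ← wordProd_cons] at h
  obtain ⟨ω', hsub, rfl⟩ := cs.exists_sublist_of_reflTransGen_bruhatStep h
  rw [hτw, bruhat_iff_reflTransGen, bruhat_iff_reflTransGen]
  cases hsub with
  | cons _ hsub => exact .inl (cs.reflTransGen_bruhatStep_of_sublist hτ hsub)
  | cons_cons _ hsub =>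
    rw [wordProd_cons, simple_mul_simple_cancel_left]
    exact .inr (cs.reflTransGen_bruhatStep_of_sublist hτ hsub)

theorem simple_mul_bruhat_simple_mul_of_isLeftDescent {i : B} {y w : W}
    (hy : cs.IsLeftDescent y i) (h : bruhat cs y w) : bruhat cs (s i * y) (s i * w) :=
  (cs.bruhat_simple_mul_or i h).elim (cs.bruhat_trans (cs.simple_mul_self_bruhat hy)) id

theorem bruhat_simple_mul_of_not_isLeftDescent {i : B} {y w : W}
    (hy : ¬cs.IsLeftDescent y i) (h : bruhat cs y w) : bruhat cs y (s i * w) :=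
  (cs.bruhat_simple_mul_or i h).elim id (cs.bruhat_trans (cs.bruhat_simple_mul_self hy))

/-! ### The right weak order -/

theorem rWeak_one (v : W) : rWeak cs 1 v := by
  simp [rWeak]

theorem isLeftDescent_of_rWeak {i : B} {y v : W} (h : rWeak cs y v) (hy : cs.IsLeftDescent y i) :
    cs.IsLeftDescent v i := by
  have hsv := cs.length_mul_le (s i * y) (y⁻¹ * v)
  rw [mul_assoc, mul_inv_cancel_left] at hsv
  have := cs.isLeftDescent_iff.1 hy
  unfold rWeak at h
  unfold IsLeftDescent
  omega

theorem rWeak_simple_mul_simple_mul {i : B} {y v : W} (h : rWeak cs y v)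
    (hy : cs.IsLeftDescent y i) : rWeak cs (s i * y) (s i * v) := by
  have := cs.isLeftDescent_iff.1 hy
  have := cs.isLeftDescent_iff.1 (cs.isLeftDescent_of_rWeak h hy)
  unfold rWeak at h ⊢
  rw [mul_inv_rev, inv_simple, mul_assoc, simple_mul_simple_cancel_left]
  omega

theorem rWeak_simple_mul_of_rWeak_simple_mul {i : B} {x v : W} (h : rWeak cs x (s i * v))
    (hv : cs.IsLeftDescent v i) (hx : ¬cs.IsLeftDescent x i) : rWeak cs (s i * x) v := by
  have := cs.isLeftDescent_iff.1 hv
  have := cs.not_isLeftDescent_iff.1 hx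
  unfold rWeak at h ⊢
  rw [mul_inv_rev, inv_simple, mul_assoc]
  omega

theorem length_inv_mul_simple_mul_lt {i : B} {y v : W} (hy : ¬cs.IsLeftDescent y i)
    (hv : cs.IsLeftDescent v i) : ℓ (y⁻¹ * (s i * v)) < ℓ (y⁻¹ * v) := by
  have hsign := (cs.inversionSign_eq_neg_one_iff (cs.isReflection_simple i)).2
    (cs.isRightDescent_inv_iff.2 hv)
  have hy' : ℓ y⁻¹ < ℓ (y⁻¹ * s i) := by
    rw [← cs.length_inv (y⁻¹ * s i), mul_inv_rev, inv_simple, inv_inv, length_inv,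
      cs.not_isLeftDescent_iff.1 hy]
    omega
  -- cocycle: `η(v⁻¹, s) = η(y⁻¹, s) · η(v⁻¹ y, y⁻¹ s y)` with `η(y⁻¹, s) = 1`
  rw [← mul_inv_cancel_right v⁻¹ y, inversionSign_mul,
    cs.inversionSign_eq_one_of_length_lt hy', one_mul] at hsign
  have := cs.length_mul_lt_of_inversionSign_eq_neg_one hsign
  rwa [show v⁻¹ * y * (y⁻¹ * s i * y⁻¹⁻¹) = (y⁻¹ * (s i * v))⁻¹ by simp [mul_assoc],
    show v⁻¹ * y = (y⁻¹ * v)⁻¹ by group, length_inv, length_inv] at this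

theorem rWeak_simple_mul_of_not_isLeftDescent {i : B} {y v : W} (h : rWeak cs y v)
    (hy : ¬cs.IsLeftDescent y i) (hv : cs.IsLeftDescent v i) : rWeak cs y (s i * v) := by
  have hlt := cs.length_inv_mul_simple_mul_lt hy hv
  have hle := cs.length_mul_le y (y⁻¹ * (s i * v))
  rw [mul_inv_cancel_left] at hle
  have := cs.isLeftDescent_iff.1 hv
  unfold rWeak at h ⊢
  omega

/-! ### The Bruhat-greatest element of `[e,v]_R ∩ [e,w]` -/

def IsBruhatGreatest (v w x : W) : Prop :=
  rWeak cs x v ∧ bruhat cs x w ∧ ∀ y, rWeak cs y v → bruhat cs y w → bruhat cs y x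

theorem isBruhatGreatest_one (v : W) : cs.IsBruhatGreatest v 1 1 := by
  refine ⟨cs.rWeak_one v, cs.bruhat_iff_reflTransGen.2 .refl, fun y _ hy ↦ ?_⟩
  rcases cs.eq_or_length_lt_of_bruhat hy with rfl | h
  exacts [hy, by simp at h]

theorem IsBruhatGreatest.simple_mul {i : B} {v w x : W} (hw : cs.IsLeftDescent w i)
    (hv : cs.IsLeftDescent v i) (hx : cs.IsBruhatGreatest (s i * v) (s i * w) x) :
    cs.IsBruhatGreatest v w (s i * x) := by
  obtain ⟨hxv, hxw, hmax⟩ := hx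
  have hxi : ¬cs.IsLeftDescent x i := fun h ↦
    cs.isLeftDescent_iff_not_isLeftDescent_mul.1 hv (cs.isLeftDescent_of_rWeak hxv h)
  refine ⟨cs.rWeak_simple_mul_of_rWeak_simple_mul hxv hv hxi, ?_, fun y hyv hyw ↦ ?_⟩
  · simpa using cs.simple_mul_bruhat_simple_mul_of_not_isLeftDescent hxw
      (cs.isLeftDescent_iff_not_isLeftDescent_mul.1 hw)
  by_cases hy : cs.IsLeftDescent y i
  · have hsy := hmax _ (cs.rWeak_simple_mul_simple_mul hyv hy)
      (cs.simple_mul_bruhat_simple_mul_of_isLeftDescent hy hyw)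
    simpa using cs.simple_mul_bruhat_simple_mul_of_not_isLeftDescent hsy hxi
  · have hy' := hmax y (cs.rWeak_simple_mul_of_not_isLeftDescent hyv hy hv)
      (cs.bruhat_simple_mul_of_not_isLeftDescent hy hyw)
    exact cs.bruhat_trans hy' (cs.bruhat_simple_mul_self hxi)

theorem IsBruhatGreatest.of_simple_mul {i : B} {v w x : W} (hw : cs.IsLeftDescent w i)
    (hv : ¬cs.IsLeftDescent v i) (hx : cs.IsBruhatGreatest v (s i * w) x) :
    cs.IsBruhatGreatest v w x :=
  ⟨hx.1, cs.bruhat_trans hx.2.1 (cs.simple_mul_self_bruhat hw), fun y hyv hyw ↦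
    hx.2.2 y hyv (cs.bruhat_simple_mul_of_not_isLeftDescent
      (fun hy ↦ hv (cs.isLeftDescent_of_rWeak hyv hy)) hyw)⟩

theorem exists_isBruhatGreatest (v w : W) : ∃ x, cs.IsBruhatGreatest v w x := by
  induction hn : ℓ w using Nat.strong_induction_on generalizing v w with
  | _ n ih =>
  rcases eq_or_ne w 1 with rfl | hw1
  · exact ⟨1, cs.isBruhatGreatest_one v⟩
  obtain ⟨i, hi⟩ := cs.exists_leftDescent_of_ne_one hw1
  have hlt : ℓ (s i * w) < n := hn ▸ hi
  by_cases hv : cs.IsLeftDescent v i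
  · obtain ⟨x, hx⟩ := ih _ hlt (s i * v) (s i * w) rfl
    exact ⟨s i * x, hx.simple_mul cs hi hv⟩
  · obtain ⟨x, hx⟩ := ih _ hlt v (s i * w) rfl
    exact ⟨x, hx.of_simple_mul cs hi hv⟩

end CoxeterSystem

theorem stmt1_general {B W : Type*} [Group W] {M : CoxeterMatrix B} (cs : CoxeterSystem M W)
    (v w : W) :
    ∃! x : W, (rWeak cs x v ∧ bruhat cs x w) ∧
      ∀ y : W, rWeak cs y v → bruhat cs y w → cs.length y ≤ cs.length x := by
  obtain ⟨x, hxv, hxw, hmax⟩ := cs.exists_isBruhatGreatest v w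
  refine ⟨x, ⟨⟨hxv, hxw⟩, fun y hyv hyw ↦ cs.length_le_of_bruhat (hmax y hyv hyw)⟩, ?_⟩
  rintro y ⟨⟨hyv, hyw⟩, hy⟩
  exact (cs.eq_or_length_lt_of_bruhat (hmax y hyv hyw)).resolve_right (hy x hxv hxw).not_gt

/-- In a finite Coxeter group, for every `v, w` the set
`[e,v]_R ∩ [e,w] = {x : x ≤_R v and x ≤ w}` has a unique element of maximal length. -/
theorem stmt1 {B W : Type*} [Group W] {M : CoxeterMatrix B} (cs : CoxeterSystem M W)
    [Finite W] (v w : W) :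
    ∃! x : W, (rWeak cs x v ∧ bruhat cs x w) ∧
      ∀ y : W, rWeak cs y v → bruhat cs y w → cs.length y ≤ cs.length x :=
  stmt1_general cs v w
end

section
/- Let W be a Coxeter group with Demazure product *. For all v, w ∈ W, w ≤_L v*w and v ≤_R v*w, where ≤_L and ≤_R denote the left and right weak Bruhat orders. -/
/-- The left weak Bruhat order: `u ≤_L v` iff `ℓ(vu⁻¹) + ℓ(u) = ℓ(v)`. -/
def lWeak {B W : Type*} [Group W] {M : CoxeterMatrix B} (cs : CoxeterSystem M W)
    (u v : W) : Prop :=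
  cs.length (v * u⁻¹) + cs.length u = cs.length v

/-- `dem` is the Demazure (Hecke) product on the Coxeter group: it satisfies
`1 * u = u`, `s * u = max{u, su}` for simple reflections `s`, and is associative. -/
def IsDemazureProduct {B W : Type*} [Group W] {M : CoxeterMatrix B}
    (cs : CoxeterSystem M W) (dem : W → W → W) : Prop :=
  (∀ u : W, dem 1 u = u) ∧
  (∀ (i : B) (u : W),
    dem (cs.simple i) u =
      if cs.length u < cs.length (cs.simple i * u) then cs.simple i * u else u) ∧
  (∀ u v x : W, dem (dem u v) x = dem u (dem v x))

/-
Induct on a reduced word for `v`, so `v = s v'` with `ℓ v = ℓ v' + 1` and, by associativity,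
`v * w = s * u` for `u = v' * w`, where inductively `w ≤_L u` and `v' ≤_R u`. If `su > u`, then
`s * u = su` and both relations pass to `su` by counting lengths. If `su < u`, then `s * u = u`
and `s v' ≤_R u` is the lifting property of the right weak order: write `u` as a reduced word for
`v'` followed by one for `v'⁻¹ u`; by the exchange condition `su` is obtained by deleting a letter,
and that letter cannot lie in the `v'` part because `s v' > v'`.

The exchange condition comes from Tits' sign representation of `W` on `W × {±1}`: it shows that
the parity of the number of occurrences of `t` in the inversion sequence of a word depends only on
the product of the word. If `s` is a left descent of `π ω`, then `π ω = s · π ρ` with `ρ` reduced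
and `s` not an inversion of `ρ`, so this number is odd for `t = s` and `s` occurs in the
inversion sequence of `ω`.
-/

open List

namespace CoxeterSystem

variable {B W : Type*} [Group W] {M : CoxeterMatrix B} (cs : CoxeterSystem M W)

local prefix:100 "s" => cs.simple
local prefix:100 "π" => cs.wordProd
local prefix:100 "ℓ" => cs.length
local prefix:100 "ris" => cs.rightInvSeq
local prefix:100 "lis" => cs.leftInvSeq

theorem simple_mul_mul_simple_eq_simple_iff (i : B) (w : W) : s i * w * s i = s i ↔ w = s i := by
  rw [mul_assoc, mul_eq_left, mul_eq_one_iff_eq_inv, inv_simple]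

theorem simple_semiconjBy_mul_simple (i i' : B) :
    SemiconjBy (s i') (s i * s i') (s i * s i')⁻¹ := by
  simp [SemiconjBy, mul_inv_rev, inv_simple, mul_assoc]

section SignRepresentation

variable [DecidableEq W]

def simpleSignPerm (i : B) : Equiv.Perm (W × ℤˣ) :=
  Function.Involutive.toPerm (fun x => (s i * x.1 * s i, if x.1 = s i then -x.2 else x.2)) <| by
    rintro ⟨w, ε⟩
    simp only [simple_mul_mul_simple_eq_simple_iff]
    split_ifs <;> simp [mul_assoc, simple_mul_simple_cancel_left]

theorem simpleSignPerm_apply (i : B) (w : W) (ε : ℤˣ) :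
    cs.simpleSignPerm i (w, ε) = (s i * w * s i, if w = s i then -ε else ε) := rfl

theorem prod_map_simpleSignPerm_apply (ω : List B) (w : W) (ε : ℤˣ) :
    (ω.map cs.simpleSignPerm).prod (w, ε) =
      (π ω * w * (π ω)⁻¹, (-1) ^ count w (ris ω) * ε) := by
  induction ω with
  | nil => simp
  | cons i ω ih =>
    have hconj : π ω * w * (π ω)⁻¹ = s i ↔ (π ω)⁻¹ * s i * π ω = w := by
      constructor
      · intro h; rw [← h]; group
      · rintro rfl; group
    rw [map_cons, prod_cons, Equiv.Perm.mul_apply, ih, simpleSignPerm_apply]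
    simp only [hconj, rightInvSeq, wordProd_cons, count_cons, beq_iff_eq, mul_inv_rev, inv_simple]
    split_ifs <;> simp [pow_succ, mul_assoc]

theorem simpleSignPerm_mul_pow_apply (i i' : B) (k : ℕ) (w : W) (ε : ℤˣ) :
    ((cs.simpleSignPerm i * cs.simpleSignPerm i') ^ k) (w, ε) =
      ((s i * s i') ^ k * w * ((s i * s i') ^ k)⁻¹,
        (-1) ^ count w ((range (2 * k)).map fun j => s i' * (s i * s i') ^ j) * ε) := by
  set p := s i * s i'
  have hconj (j : ℕ) : (p ^ j)⁻¹ * s i' * p ^ j = s i' * p ^ (2 * j) := by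
    rw [← inv_pow, ← ((cs.simple_semiconjBy_mul_simple i i').pow_right j).eq, mul_assoc,
      ← pow_add, two_mul]
  induction k with
  | zero => simp
  | succ k ih =>
    have hw (x : W) : p ^ k * w * (p ^ k)⁻¹ = x ↔ (p ^ k)⁻¹ * x * p ^ k = w :=
      ⟨by rintro rfl; group, by rintro rfl; group⟩
    have hsimple (y : W) : s i' * y * s i' = s i ↔ y = s i' * p := by
      constructor
      · intro h; simp [p, ← h, mul_assoc]
      · rintro rfl; simp [p, mul_assoc, simple_mul_simple_cancel_left]
    have h1 : p ^ k * w * (p ^ k)⁻¹ = s i' ↔ s i' * p ^ (2 * k) = w := by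
      rw [hw, hconj]
    have h2 : s i' * (p ^ k * w * (p ^ k)⁻¹) * s i' = s i ↔ s i' * p ^ (2 * k + 1) = w := by
      rw [hsimple, hw, pow_succ, ← mul_assoc (s i') (p ^ (2 * k)) p, ← hconj]
      simp only [mul_assoc, (Commute.self_pow p k).eq]
    rw [pow_succ', Equiv.Perm.mul_apply, ih, Equiv.Perm.mul_apply, simpleSignPerm_apply,
      simpleSignPerm_apply]
    refine Prod.ext ?_ ?_
    · simp [p, pow_succ', mul_assoc, inv_simple]
    · simp only [h1, h2, show 2 * (k + 1) = 2 * k + 1 + 1 by ring, range_succ, map_append,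
        count_append, map_cons, map_nil, count_singleton, beq_iff_eq, pow_add]
      split_ifs <;> simp

theorem isLiftable_simpleSignPerm : M.IsLiftable cs.simpleSignPerm := by
  intro i i'
  ext1 ⟨w, ε⟩
  set m := M i i'
  have hperiodic : ∀ j, s i' * (s i * s i') ^ (m + j) = s i' * (s i * s i') ^ j := by
    simp [m, pow_add, simple_mul_simple_pow]
  have hcount : count w ((range (2 * m)).map fun j => s i' * (s i * s i') ^ j) =
      2 * count w ((range m).map fun j => s i' * (s i * s i') ^ j) := by
    simp only [two_mul, range_add, map_append, map_map, Function.comp_def, hperiodic,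
      count_append]
  rw [simpleSignPerm_mul_pow_apply, simple_mul_simple_pow, hcount, pow_mul]
  simp

noncomputable def signRep : W →* Equiv.Perm (W × ℤˣ) :=
  cs.lift ⟨cs.simpleSignPerm, cs.isLiftable_simpleSignPerm⟩

theorem signRep_wordProd (ω : List B) : cs.signRep (π ω) = (ω.map cs.simpleSignPerm).prod := by
  rw [wordProd, map_list_prod, map_map]
  congr 2
  ext1 i
  exact cs.lift_apply_simple _ i

theorem neg_one_pow_count_rightInvSeq_eq {ω ω' : List B} (h : π ω = π ω') (t : W) :
    (-1 : ℤˣ) ^ count t (ris ω) = (-1) ^ count t (ris ω') := by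
  have := congrArg (fun g => (cs.signRep g (t, 1)).2) h
  simpa [signRep_wordProd, prod_map_simpleSignPerm_apply] using this

theorem neg_one_pow_count_leftInvSeq_eq {ω ω' : List B} (h : π ω = π ω') (t : W) :
    (-1 : ℤˣ) ^ count t (lis ω) = (-1) ^ count t (lis ω') := by
  have := cs.neg_one_pow_count_rightInvSeq_eq (ω := ω.reverse) (ω' := ω'.reverse) (by simp [h]) t
  simpa [rightInvSeq_reverse] using this

end SignRepresentation

theorem simple_mem_leftInvSeq {ω : List B} {i : B} (h : cs.IsLeftDescent (π ω) i) :
    s i ∈ lis ω := by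
  classical
  obtain ⟨ρ, hρ, hρω⟩ := cs.exists_isReduced (s i * π ω)
  have hω : π (i :: ρ) = π ω := by rw [wordProd_cons, ← hρω, simple_mul_simple_cancel_left]
  have hρ_not_mem : s i ∉ lis ρ := fun hmem => by
    have hlt := (cs.isLeftInversion_of_mem_leftInvSeq hρ hmem).2
    rw [← hρω, simple_mul_simple_cancel_left] at hlt
    exact lt_asymm h hlt
  have hcount : count (s i) (lis (i :: ρ)) = 1 := by
    have hconj := count_map_of_injective (lis ρ) _ (MulAut.conj (s i)).injective (s i)
    rw [MulAut.conj_apply, mul_inv_cancel_right] at hconj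
    rw [leftInvSeq, count_cons_self, hconj, count_eq_zero_of_not_mem hρ_not_mem]
  by_contra hmem
  have hparity := cs.neg_one_pow_count_leftInvSeq_eq hω (s i)
  rw [hcount, count_eq_zero_of_not_mem hmem] at hparity
  exact absurd hparity (by decide)

theorem exists_simple_mul_wordProd_eq_eraseIdx {ω : List B} {i : B}
    (h : cs.IsLeftDescent (π ω) i) : ∃ j < ω.length, s i * π ω = π (ω.eraseIdx j) := by
  obtain ⟨j, hj, hget⟩ := List.mem_iff_getElem.mp (cs.simple_mem_leftInvSeq h)
  rw [length_leftInvSeq] at hj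
  refine ⟨j, hj, ?_⟩
  rw [← hget, ← getD_eq_getElem _ 1, getD_leftInvSeq_mul_wordProd]

end CoxeterSystem

section WeakOrder

open CoxeterSystem

variable {B W : Type*} [Group W] {M : CoxeterMatrix B} (cs : CoxeterSystem M W)

local prefix:100 "s" => cs.simple
local prefix:100 "π" => cs.wordProd
local prefix:100 "ℓ" => cs.length

theorem lWeak_of_length_add_le {u v : W} (h : ℓ (v * u⁻¹) + ℓ u ≤ ℓ v) : lWeak cs u v :=
  le_antisymm h (by simpa using cs.length_mul_le (v * u⁻¹) u)

theorem rWeak_of_length_add_le {u v : W} (h : ℓ u + ℓ (u⁻¹ * v) ≤ ℓ v) : rWeak cs u v :=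
  le_antisymm h (by simpa using cs.length_mul_le u (u⁻¹ * v))

theorem lWeak_simple_mul {w u : W} {i : B} (h : lWeak cs w u) (hu : ¬cs.IsLeftDescent u i) :
    lWeak cs w (s i * u) := by
  apply lWeak_of_length_add_le
  have hsu := cs.not_isLeftDescent_iff.mp hu
  have hle := cs.length_mul_le (s i) (u * w⁻¹)
  rw [cs.length_simple, ← mul_assoc] at hle
  unfold lWeak at h
  omega

theorem rWeak_simple_mul_simple_mul {v u : W} {i : B} (h : rWeak cs v u)
    (hv : ¬cs.IsLeftDescent v i) (hu : ¬cs.IsLeftDescent u i) :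
    rWeak cs (s i * v) (s i * u) := by
  have hcancel : (s i * v)⁻¹ * (s i * u) = v⁻¹ * u := by
    rw [mul_inv_rev, inv_simple, mul_assoc, simple_mul_simple_cancel_left]
  unfold rWeak at h ⊢
  rw [hcancel, cs.not_isLeftDescent_iff.mp hv, cs.not_isLeftDescent_iff.mp hu, ← h]
  ring

theorem rWeak_simple_mul {v u : W} {i : B} (h : rWeak cs v u)
    (hv : ¬cs.IsLeftDescent v i) (hu : cs.IsLeftDescent u i) : rWeak cs (s i * v) u := by
  obtain ⟨α, hα, rfl⟩ := cs.exists_isReduced v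
  obtain ⟨β, hβ, hβu⟩ := cs.exists_isReduced ((π α)⁻¹ * u)
  have hαβ : π (α ++ β) = u := by rw [wordProd_append, ← hβu, mul_inv_cancel_left]
  obtain ⟨j, hj, hexch⟩ := cs.exists_simple_mul_wordProd_eq_eraseIdx (hαβ ▸ hu)
  rw [length_append] at hj
  by_cases hjα : j < α.length
  · refine absurd ?_ hv
    have hsα : s i * π α = π (α.eraseIdx j) := mul_right_cancel (b := π β) <| by
      rw [mul_assoc, ← wordProd_append, hexch, eraseIdx_append_of_lt_length hjα, wordProd_append]
    calc ℓ (s i * π α) ≤ (α.eraseIdx j).length := hsα ▸ cs.length_wordProd_le _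
      _ < α.length := by rw [length_eraseIdx_of_lt hjα]; omega
      _ = ℓ (π α) := hα.eq.symm
  · have hjβ : j - α.length < β.length := by omega
    have hrest : (s i * π α)⁻¹ * u = π (β.eraseIdx (j - α.length)) := by
      rw [mul_inv_rev, inv_simple, mul_assoc, ← hαβ, hexch,
        eraseIdx_append_of_length_le (not_lt.mp hjα), wordProd_append, inv_mul_cancel_left]
    have hrest_le := cs.length_wordProd_le (β.eraseIdx (j - α.length))
    rw [length_eraseIdx_of_lt hjβ, ← hrest] at hrest_le
    have hβ_len : β.length = ℓ ((π α)⁻¹ * u) := by rw [← hβ.eq, hβu]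
    have hsα := cs.not_isLeftDescent_iff.mp hv
    apply rWeak_of_length_add_le
    unfold rWeak at h
    omega

theorem IsDemazureProduct.lWeak_and_rWeak_wordProd {dem : W → W → W}
    (hdem : IsDemazureProduct cs dem) {ω : List B} (hω : cs.IsReduced ω) (w : W) :
    lWeak cs w (dem (π ω) w) ∧ rWeak cs (π ω) (dem (π ω) w) := by
  obtain ⟨hdem_one, hdem_simple, hdem_assoc⟩ := hdem
  induction ω with
  | nil => simp [lWeak, rWeak, hdem_one]
  | cons i ω ih =>
    have hω' : cs.IsReduced ω := hω.drop 1
    obtain ⟨hw, hv⟩ := ih hω'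
    have hlen : ℓ (s i * π ω) = ℓ (π ω) + 1 := by
      rw [← wordProd_cons, hω.eq, hω'.eq, length_cons]
    have hi : ¬cs.IsLeftDescent (π ω) i := cs.not_isLeftDescent_iff.mpr hlen
    have hcons : π (i :: ω) = dem (s i) (π ω) := by
      rw [hdem_simple, if_pos (by omega), wordProd_cons]
    rw [hcons, hdem_assoc, hdem_simple, ← hcons]
    split_ifs with hu
    · exact ⟨lWeak_simple_mul cs hw hu.not_gt, rWeak_simple_mul_simple_mul cs hv hi hu.not_gt⟩
    · refine ⟨hw, rWeak_simple_mul cs hv hi ?_⟩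
      exact lt_of_le_of_ne (not_lt.mp hu) (cs.length_simple_mul_ne _ i)

end WeakOrder

/-- For all `v, w ∈ W`: `w ≤_L v*w` and `v ≤_R v*w` for the Demazure product `*`. -/
theorem stmt5 {B W : Type*} [Group W] {M : CoxeterMatrix B} (cs : CoxeterSystem M W)
    (dem : W → W → W) (hdem : IsDemazureProduct cs dem) (v w : W) :
    lWeak cs w (dem v w) ∧ rWeak cs v (dem v w) := by
  obtain ⟨ω, hω, rfl⟩ := cs.exists_isReduced v
  exact hdem.lWeak_and_rWeak_wordProd cs hω w
end

section
/- Let b ∈ B(∞) and let (μ_w)_{w∈W} be the vertex data of the MV polytope Pol(b). For every w ∈ W and j ∈ I with ℓ(ws_j) > ℓ(w), one has μ_{ws_j} − μ_w = ε_j(σ_{w⁻¹}(b)) · (w·α_j∨), and consequently μ_w(b) = w·wt(σ_{w⁻¹}(b)) − wt(b) for all w (where the data is normalized so μ_e = 0). -/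
/-- Let `C` be the crystal `B(∞)` (abstractly: a set with weight function `wt`,
crystal operators giving `ε i`, and Saito reflections `σ i`, the latter assembled
into `σW w = σ_{i₁} ∘ ⋯ ∘ σ_{i_m}` for a reduced word of `w`).  Let `μ b` be the
vertex data of the MV polytope `Pol b`, normalized so `μ b 1 = 0`; its defining
relation to the Lusztig data is: `μ b sᵢ − μ b 1 = εᵢ(b) • αᵢ` (first Lusztig
datum) and the Saito reflection shifts Lusztig data left:
`μ (σᵢ b) u = sᵢ⁻¹ • (μ b (sᵢ u) − μ b sᵢ)` whenever `ℓ(sᵢu) = ℓ(u) + 1`.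
Also `wt (σᵢ b) = sᵢ • (wt b + εᵢ(b) • αᵢ)`.  Then for every `w` and `j` with
`ℓ(w s_j) > ℓ(w)` one has `μ b (w s_j) − μ b w = ε_j(σ_{w⁻¹}(b)) • (w • α_j)`,
and consequently `μ b w = w • wt (σ_{w⁻¹}(b)) − wt b` for all `w`. -/
theorem stmt17 {B W : Type*} [Group W] {M : CoxeterMatrix B} (cs : CoxeterSystem M W)
    {V : Type*} [AddCommGroup V] [DistribMulAction W V] (α : B → V)
    {C : Type*} (wt : C → V) (ε : B → C → ℕ)
    (σ : B → C → C) (σW : W → C → C)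
    (hσ1 : ∀ b : C, σW 1 b = b)
    (hσmul : ∀ (i : B) (u : W) (b : C),
      cs.length (cs.simple i * u) = cs.length u + 1 →
      σW (cs.simple i * u) b = σ i (σW u b))
    (μ : C → W → V)
    (hμe : ∀ b : C, μ b 1 = 0)
    (hε : ∀ (i : B) (b : C), μ b (cs.simple i) - μ b 1 = (ε i b) • α i)
    (hshift : ∀ (i : B) (b : C) (u : W),
      cs.length (cs.simple i * u) = cs.length u + 1 →
      μ (σ i b) u = (cs.simple i)⁻¹ • (μ b (cs.simple i * u) - μ b (cs.simple i)))
    (hwt : ∀ (i : B) (b : C), wt (σ i b) = cs.simple i • (wt b + (ε i b) • α i))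
    (b : C) :
    (∀ (w : W) (j : B), cs.length (w * cs.simple j) = cs.length w + 1 →
      μ b (w * cs.simple j) - μ b w = (ε j (σW w⁻¹ b)) • (w • α j)) ∧
    (∀ w : W, μ b w = w • wt (σW w⁻¹ b) - wt b) := by
  -- `μ b (s i)` is the first Lusztig datum
  have hεs : ∀ (i : B) (b : C), μ b (cs.simple i) = (ε i b) • α i := by
    intro i b
    have := hε i b
    rwa [hμe, sub_zero] at this
  -- rearranged shift relation
  have hA : ∀ (i : B) (b : C) (u : W),
      cs.length (cs.simple i * u) = cs.length u + 1 →
      μ b (cs.simple i * u) = cs.simple i • μ (σ i b) u + μ b (cs.simple i) := by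
    intro i b u h
    rw [hshift i b u h, smul_inv_smul]
    abel
  -- σW peels simple reflections from the right as well
  have hσmul' : ∀ (n : ℕ) (x : W), cs.length x = n → ∀ (i : B) (b : C),
      cs.length (x * cs.simple i) = cs.length x + 1 →
      σW (x * cs.simple i) b = σW x (σ i b) := by
    intro n
    induction n using Nat.strong_induction_on with
    | _ n ih =>
      intro x hx i b hlen
      rcases eq_or_ne x 1 with rfl | hne
      · rw [one_mul, hσ1]
        have h1 : cs.length (cs.simple i * 1) = cs.length (1 : W) + 1 := by
          simp [cs.length_simple]
        calc σW (cs.simple i) b = σW (cs.simple i * 1) b := by rw [mul_one]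
          _ = σ i (σW 1 b) := hσmul i 1 b h1
          _ = σ i b := by rw [hσ1]
      · obtain ⟨k, hk⟩ := cs.exists_leftDescent_of_ne_one hne
        have hk' : cs.length (cs.simple k * x) + 1 = cs.length x := cs.isLeftDescent_iff.mp hk
        set x' := cs.simple k * x with hx'
        have hxx : x = cs.simple k * x' := by
          rw [hx', ← mul_assoc, cs.simple_mul_simple_self, one_mul]
        have hxs : x * cs.simple i = cs.simple k * (x' * cs.simple i) := by
          rw [hxx, mul_assoc]
        -- lengths
        have h1 : cs.length (x' * cs.simple i) = cs.length x' + 1 := by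
          rcases cs.length_mul_simple x' i with h | h
          · exact h
          · exfalso
            have hle : cs.length (x * cs.simple i) ≤ cs.length (x' * cs.simple i) + 1 := by
              calc cs.length (x * cs.simple i)
                  = cs.length (cs.simple k * (x' * cs.simple i)) := by rw [hxs]
                _ ≤ cs.length (cs.simple k) + cs.length (x' * cs.simple i) :=
                    cs.length_mul_le _ _
                _ = cs.length (x' * cs.simple i) + 1 := by rw [cs.length_simple]; ring
            omega
        have h2 : cs.length (cs.simple k * (x' * cs.simple i))
            = cs.length (x' * cs.simple i) + 1 := by
          rw [← hxs]; omega
        have h3 : cs.length (cs.simple k * x') = cs.length x' + 1 := by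
          rw [← hxx]; omega
        calc σW (x * cs.simple i) b
            = σW (cs.simple k * (x' * cs.simple i)) b := by rw [hxs]
          _ = σ k (σW (x' * cs.simple i) b) := hσmul k _ b h2
          _ = σ k (σW x' (σ i b)) := by
              rw [ih (cs.length x') (by omega) x' rfl i b h1]
          _ = σW (cs.simple k * x') (σ i b) := (hσmul k x' (σ i b) h3).symm
          _ = σW x (σ i b) := by rw [← hxx]
  -- the inverse relation: σW w⁻¹ with w = s k * w'
  have hσinv : ∀ (k : B) (w' : W) (b : C),
      cs.length (cs.simple k * w') = cs.length w' + 1 →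
      σW (cs.simple k * w')⁻¹ b = σW w'⁻¹ (σ k b) := by
    intro k w' b h
    have h1 : (cs.simple k * w')⁻¹ = w'⁻¹ * cs.simple k := by
      rw [mul_inv_rev, cs.inv_simple]
    have h2 : cs.length (w'⁻¹ * cs.simple k) = cs.length w'⁻¹ + 1 := by
      rw [← h1, cs.length_inv, cs.length_inv, h]
    rw [h1, hσmul' (cs.length w'⁻¹) w'⁻¹ rfl k b h2]
  -- the main "cocycle" formula
  have GC : ∀ (n : ℕ) (v : W), cs.length v = n → ∀ (u : W) (b : C),
      cs.length (v * u) = cs.length v + cs.length u →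
      μ b (v * u) = v • μ (σW v⁻¹ b) u + μ b v := by
    intro n
    induction n using Nat.strong_induction_on with
    | _ n ih =>
      intro v hv u b hlen
      rcases eq_or_ne v 1 with rfl | hne
      · rw [one_mul, inv_one, hσ1, one_smul, hμe]
        abel
      · obtain ⟨k, hk⟩ := cs.exists_leftDescent_of_ne_one hne
        have hk' : cs.length (cs.simple k * v) + 1 = cs.length v := cs.isLeftDescent_iff.mp hk
        set v' := cs.simple k * v with hv'
        have hvv : v = cs.simple k * v' := by
          rw [hv', ← mul_assoc, cs.simple_mul_simple_self, one_mul]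
        have h3 : cs.length (cs.simple k * v') = cs.length v' + 1 := by
          rw [← hvv]; omega
        have hvu : v * u = cs.simple k * (v' * u) := by rw [hvv, mul_assoc]
        have h1 : cs.length (v' * u) = cs.length v' + cs.length u := by
          have hle : cs.length (v' * u) ≤ cs.length v' + cs.length u := cs.length_mul_le _ _
          have hge : cs.length (v * u) ≤ cs.length (v' * u) + 1 := by
            calc cs.length (v * u)
                = cs.length (cs.simple k * (v' * u)) := by rw [hvu]
              _ ≤ cs.length (cs.simple k) + cs.length (v' * u) := cs.length_mul_le _ _
              _ = cs.length (v' * u) + 1 := by rw [cs.length_simple]; ring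
          omega
        have h2 : cs.length (cs.simple k * (v' * u)) = cs.length (v' * u) + 1 := by
          rw [← hvu]; omega
        have hIH : μ (σ k b) (v' * u)
            = v' • μ (σW v'⁻¹ (σ k b)) u + μ (σ k b) v' :=
          ih (cs.length v') (by omega) v' rfl u (σ k b) h1
        have hσv : σW v'⁻¹ (σ k b) = σW v⁻¹ b := by
          rw [← hσinv k v' b h3, ← hvv]
        calc μ b (v * u) = μ b (cs.simple k * (v' * u)) := by rw [hvu]
          _ = cs.simple k • μ (σ k b) (v' * u) + μ b (cs.simple k) := hA k b (v' * u) h2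
          _ = cs.simple k • (v' • μ (σW v⁻¹ b) u + μ (σ k b) v') + μ b (cs.simple k) := by
              rw [hIH, hσv]
          _ = (cs.simple k * v') • μ (σW v⁻¹ b) u
              + (cs.simple k • μ (σ k b) v' + μ b (cs.simple k)) := by
              rw [smul_add, ← mul_smul]; abel
          _ = v • μ (σW v⁻¹ b) u + μ b v := by
              rw [← hvv, ← hA k b v' h3, ← hvv]
  -- second part, by strong induction on length
  have part2 : ∀ (n : ℕ) (w : W), cs.length w = n → ∀ b : C,
      μ b w = w • wt (σW w⁻¹ b) - wt b := by
    intro n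
    induction n using Nat.strong_induction_on with
    | _ n ih =>
      intro w hw b
      rcases eq_or_ne w 1 with rfl | hne
      · rw [hμe, inv_one, hσ1, one_smul]; abel
      · obtain ⟨k, hk⟩ := cs.exists_leftDescent_of_ne_one hne
        have hk' : cs.length (cs.simple k * w) + 1 = cs.length w := cs.isLeftDescent_iff.mp hk
        set w' := cs.simple k * w with hw'
        have hww : w = cs.simple k * w' := by
          rw [hw', ← mul_assoc, cs.simple_mul_simple_self, one_mul]
        have h3 : cs.length (cs.simple k * w') = cs.length w' + 1 := by
          rw [← hww]; omega
        have hIH : μ (σ k b) w' = w' • wt (σW w'⁻¹ (σ k b)) - wt (σ k b) :=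
          ih (cs.length w') (by omega) w' rfl (σ k b)
        have hσv : σW w'⁻¹ (σ k b) = σW w⁻¹ b := by
          rw [← hσinv k w' b h3, ← hww]
        have hcancel : cs.simple k • wt (σ k b) = wt b + (ε k b) • α k := by
          rw [hwt k b, smul_smul, cs.simple_mul_simple_self, one_smul]
        calc μ b w = μ b (cs.simple k * w') := by rw [hww]
          _ = cs.simple k • μ (σ k b) w' + μ b (cs.simple k) := hA k b w' h3
          _ = cs.simple k • (w' • wt (σW w⁻¹ b) - wt (σ k b)) + (ε k b) • α k := by
              rw [hIH, hσv, hεs]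
          _ = (cs.simple k * w') • wt (σW w⁻¹ b)
              - cs.simple k • wt (σ k b) + (ε k b) • α k := by
              rw [smul_sub, ← mul_smul]
          _ = w • wt (σW w⁻¹ b) - (wt b + (ε k b) • α k) + (ε k b) • α k := by
              rw [← hww, hcancel]
          _ = w • wt (σW w⁻¹ b) - wt b := by abel
  refine ⟨?_, fun w => part2 (cs.length w) w rfl b⟩
  intro w j h
  have hlen : cs.length (w * cs.simple j) = cs.length w + cs.length (cs.simple j) := by
    rw [cs.length_simple]; exact h
  have := GC (cs.length w) w rfl (cs.simple j) b hlen
  rw [this, hεs]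
  rw [smul_comm]
  abel
end
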